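/- Let S be a finite nonempty set of vectors in R^D with ||x||_2 ≤ U < 1 for all x ∈ S, and q ∈ R^D with ||q||_2 = 1. Suppose the maximizer p of q^T x over S satisfies q^T p > q^T x + (1/2)·U^{2^{m+1}} for every other x ∈ S. Then p is also the unique minimizer of ||Q(q) - P(x)||_2 over S, where P(x) = [x; ||x||^2; ||x||^4; ...; ||x||^{2^m}] and Q(q) = [q; 1/2; ...; 1/2]. -/

import Mathlib

noncomputable def alshP (D m : ℕ) (x : EuclideanSpace ℝ (Fin D)) :
    EuclideanSpace ℝ (Fin (D + m)) :=
  WithLp.toLp 2 (fun i => Fin.addCases (motive := fun _ => ℝ) (fun j => x j) (fun j => ‖x‖ ^ (2 ^ (j.val + 1))) i)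

noncomputable def alshQ (D m : ℕ) (q : EuclideanSpace ℝ (Fin D)) :
    EuclideanSpace ℝ (Fin (D + m)) :=
  WithLp.toLp 2 (fun i => Fin.addCases (motive := fun _ => ℝ) (fun j => q j) (fun _ => 1 / 2) i)

lemma alsh_norm_sq (D m : ℕ) (q x : EuclideanSpace ℝ (Fin D)) (hq : ‖q‖ = 1) :
    ‖alshQ D m q - alshP D m x‖ ^ 2
      = 1 + (m : ℝ) / 4 - 2 * (∑ i, q i * x i) + ‖x‖ ^ (2 ^ (m + 1)) := by
  have hsum : ‖alshQ D m q - alshP D m x‖ ^ 2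
      = ∑ i : Fin (D + m), ((alshQ D m q - alshP D m x) i) ^ 2 := by
    rw [EuclideanSpace.norm_eq, Real.sq_sqrt (by positivity)]
    simp [Real.norm_eq_abs, sq_abs]
  rw [hsum]
  have happ : ∀ i, (alshQ D m q - alshP D m x) i = alshQ D m q i - alshP D m x i :=
    fun i => rfl
  simp only [happ]
  rw [Fin.sum_univ_add]
  simp only [alshQ, alshP, PiLp.toLp_apply, Fin.addCases_left, Fin.addCases_right]
  have hq2 : ∑ j : Fin D, (q j) ^ 2 = 1 := by
    have h := EuclideanSpace.norm_eq q
    rw [hq] at h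
    have h2 : (1:ℝ) ^ 2 = ∑ j : Fin D, ‖q j‖ ^ 2 := by
      rw [h, Real.sq_sqrt (by positivity)]
    simpa [Real.norm_eq_abs, sq_abs] using h2.symm
  have hx2 : ∑ j : Fin D, (x j) ^ 2 = ‖x‖ ^ 2 := by
    rw [EuclideanSpace.norm_eq, Real.sq_sqrt (by positivity)]
    simp [Real.norm_eq_abs, sq_abs]
  have h1 : ∑ j : Fin D, (q j - x j) ^ 2
      = 1 + ‖x‖ ^ 2 - 2 * ∑ i, q i * x i := by
    have h : ∀ j, (q j - x j) ^ 2 = (q j)^2 + (x j)^2 - 2 * (q j * x j) := fun j => by ring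
    simp only [h, Finset.sum_sub_distrib, Finset.sum_add_distrib, ← Finset.mul_sum, hq2, hx2]
  have hterm : ∀ j : Fin m, (1 / 2 - ‖x‖ ^ (2 ^ ((j:ℕ) + 1))) ^ 2
      = 1 / 4 + (‖x‖ ^ (2 ^ ((j:ℕ) + 1 + 1)) - ‖x‖ ^ (2 ^ ((j:ℕ) + 1))) := by
    intro j
    have : (‖x‖ ^ (2 ^ ((j:ℕ) + 1))) ^ 2 = ‖x‖ ^ (2 ^ ((j:ℕ) + 1 + 1)) := by
      rw [← pow_mul]; ring_nf
    nlinarith [this]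
  have htel : ∑ j : Fin m, (‖x‖ ^ (2 ^ ((j:ℕ) + 1 + 1)) - ‖x‖ ^ (2 ^ ((j:ℕ) + 1)))
      = ‖x‖ ^ (2 ^ (m + 1)) - ‖x‖ ^ 2 := by
    rw [Fin.sum_univ_eq_sum_range (fun i => ‖x‖ ^ (2 ^ (i + 1 + 1)) - ‖x‖ ^ (2 ^ (i + 1)))]
    have := Finset.sum_range_sub (fun i => ‖x‖ ^ (2 ^ (i + 1))) m
    simpa using this
  have h2 : ∑ j : Fin m, (1 / 2 - ‖x‖ ^ (2 ^ ((j:ℕ) + 1))) ^ 2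
      = (m : ℝ) / 4 + ‖x‖ ^ (2 ^ (m + 1)) - ‖x‖ ^ 2 := by
    simp only [hterm, Finset.sum_add_distrib, htel, Finset.sum_const, Finset.card_univ,
      Fintype.card_fin, nsmul_eq_mul]
    ring
  rw [h1, h2]
  ring

theorem alsh_argmax_argmin (D m : ℕ) (hm : 1 ≤ m) (U : ℝ) (hU : U < 1)
    (S : Finset (EuclideanSpace ℝ (Fin D))) (hS : S.Nonempty)
    (hnorm : ∀ x ∈ S, ‖x‖ ≤ U)
    (q : EuclideanSpace ℝ (Fin D)) (hq : ‖q‖ = 1)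
    (p : EuclideanSpace ℝ (Fin D)) (hp : p ∈ S)
    (hgap : ∀ x ∈ S, x ≠ p →
      (∑ i, q i * p i) - (∑ i, q i * x i) > (1 / 2) * U ^ (2 ^ (m + 1))) :
    ∀ x ∈ S, x ≠ p → ‖alshQ D m q - alshP D m p‖ < ‖alshQ D m q - alshP D m x‖ := by
  intro x hx hxp
  have key : ‖alshQ D m q - alshP D m p‖ ^ 2 < ‖alshQ D m q - alshP D m x‖ ^ 2 := by
    rw [alsh_norm_sq D m q p hq, alsh_norm_sq D m q x hq]
    have hgapx := hgap x hx hxp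
    have hUp : ‖p‖ ^ (2 ^ (m + 1)) ≤ U ^ (2 ^ (m + 1)) :=
      pow_le_pow_left₀ (norm_nonneg p) (hnorm p hp) _
    have hx0 : (0:ℝ) ≤ ‖x‖ ^ (2 ^ (m + 1)) := by positivity
    linarith
  exact lt_of_pow_lt_pow_left₀ 2 (norm_nonneg _) key
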